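/- Let H be a finite-dimensional complex inner product space and let P_E and P_O be orthogonal projections on H with P_E + P_O = 1. Let ψ and φ be unit vectors in H such that ⟪P_E ψ, P_E φ⟫ = 0 and ⟪P_O ψ, P_O φ⟫ = 0. Then there exists an orthogonal projection S on H that commutes with P_E and satisfies S ψ = ψ and S φ = 0; in particular ⟪ψ, S ψ⟫ − ⟪φ, S φ⟫ = 1. -/

import Mathlib

open Matrix
open scoped ComplexOrder Kronecker

/-- The trace norm `‖Y‖₁ = Tr √(Yᴴ Y)` of a complex matrix. -/
noncomputable def traceNorm {m : Type*} [Fintype m] [DecidableEq m]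
    (Y : Matrix m m ℂ) : ℝ :=
  ((Matrix.posSemidef_conjTranspose_mul_self Y).1.eigenvectorUnitary.1 *
    diagonal ((fun x : ℝ => (x : ℂ)) ∘ (√·) ∘ (Matrix.posSemidef_conjTranspose_mul_self Y).1.eigenvalues) *
    (star (Matrix.posSemidef_conjTranspose_mul_self Y).1.eigenvectorUnitary :
      Matrix m m ℂ)).trace.re

/-- The inner product `⟪x, y⟫ = ∑ i, conj (x i) * y i` on `m → ℂ`. -/
noncomputable def cinner {m : Type*} [Fintype m] (x y : m → ℂ) : ℂ := star x ⬝ᵥ y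

/-- An orthogonal projection: a self-adjoint idempotent matrix. -/
def IsOrthoProj {m : Type*} [Fintype m] (P : Matrix m m ℂ) : Prop :=
  P.IsHermitian ∧ P * P = P

/-- An effect: an operator `S` with `0 ≤ S ≤ 1`. -/
def IsEffect {m : Type*} [Fintype m] [DecidableEq m] (S : Matrix m m ℂ) : Prop :=
  S.PosSemidef ∧ (1 - S).PosSemidef

/-- The rank-one operator `|ψ⟩⟨ψ|`. -/
noncomputable def outer {m : Type*} (ψ : m → ℂ) : Matrix m m ℂ :=
  Matrix.vecMulVec ψ (star ψ)

/-!
Split `ψ = P ψ + (1 - P) ψ`. The two parts are orthogonal and each is an eigenvector of `P`, so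
the sum `S` of the projections onto the lines through them is a projection commuting with `P`
that fixes `ψ`. The hypotheses say exactly that `φ` is orthogonal to both parts, so `S φ = 0`.
-/

section

variable {m : Type*} [Fintype m]

@[simp]
lemma cinner_zero_right (x : m → ℂ) : cinner x 0 = 0 :=
  dotProduct_zero _

lemma cinner_mulVec_left (A : Matrix m m ℂ) (x y : m → ℂ) :
    cinner (A *ᵥ x) y = cinner x (Aᴴ *ᵥ y) := by
  rw [cinner, cinner, star_mulVec, dotProduct_mulVec]

lemma isSelfAdjoint_cinner_self (u : m → ℂ) : IsSelfAdjoint (cinner u u) :=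
  IsSelfAdjoint.of_nonneg (dotProduct_star_self_nonneg u)

lemma isOrthoProj_iff_isStarProjection {P : Matrix m m ℂ} :
    IsOrthoProj P ↔ IsStarProjection P :=
  isStarProjection_iff'.trans And.comm |>.symm

lemma IsStarProjection.cinner_mulVec_left_eq {P : Matrix m m ℂ} (hP : IsStarProjection P)
    (x y : m → ℂ) : cinner (P *ᵥ x) y = cinner (P *ᵥ x) (P *ᵥ y) := by
  have hPH : Pᴴ = P := hP.isSelfAdjoint.star_eq
  rw [cinner_mulVec_left, cinner_mulVec_left, hPH, mulVec_mulVec, hP.isIdempotentElem.eq]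

lemma IsStarProjection.mulVec_mulVec_self {P : Matrix m m ℂ} (hP : IsStarProjection P)
    (x : m → ℂ) : P *ᵥ (P *ᵥ x) = P *ᵥ x := by
  rw [mulVec_mulVec, hP.isIdempotentElem.eq]

/-- The orthogonal projection onto `span {u}`; since `(0 : ℂ)⁻¹ = 0`, also for `u = 0`. -/
noncomputable def lineProj (u : m → ℂ) : Matrix m m ℂ :=
  (cinner u u)⁻¹ • outer u

lemma lineProj_mulVec (u x : m → ℂ) : lineProj u *ᵥ x = (cinner u x / cinner u u) • u := by
  rw [lineProj, smul_mulVec, outer, vecMulVec_mulVec, op_smul_eq_smul, smul_smul, cinner,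
    cinner, div_eq_inv_mul]

lemma lineProj_mulVec_self (u : m → ℂ) : lineProj u *ᵥ u = u := by
  rcases eq_or_ne u 0 with rfl | hu
  · simp [lineProj, outer]
  · rw [lineProj_mulVec, div_self (by simpa [cinner] using hu), one_smul]

lemma lineProj_mulVec_of_cinner_eq {u x : m → ℂ} (h : cinner u x = cinner u u) :
    lineProj u *ᵥ x = u := by
  rw [lineProj_mulVec, h, ← lineProj_mulVec, lineProj_mulVec_self]

lemma lineProj_mulVec_of_cinner_eq_zero {u x : m → ℂ} (h : cinner u x = 0) :
    lineProj u *ᵥ x = 0 := by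
  rw [lineProj_mulVec, h, zero_div, zero_smul]

lemma mul_lineProj (M : Matrix m m ℂ) (u : m → ℂ) :
    M * lineProj u = (cinner u u)⁻¹ • vecMulVec (M *ᵥ u) (star u) := by
  rw [lineProj, mul_smul_comm, outer, mul_vecMulVec]

lemma isStarProjection_lineProj (u : m → ℂ) : IsStarProjection (lineProj u) where
  isIdempotentElem := by rw [IsIdempotentElem, mul_lineProj, lineProj_mulVec_self]; rfl
  isSelfAdjoint := by
    rw [IsSelfAdjoint, lineProj, star_smul, star_inv₀, (isSelfAdjoint_cinner_self u).star_eq,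
      outer, star_eq_conjTranspose, conjTranspose_vecMulVec, star_star]

lemma commute_lineProj_of_mulVec_eq {P : Matrix m m ℂ} (hP : IsSelfAdjoint P) {u : m → ℂ}
    (hu : P *ᵥ u = u) : Commute P (lineProj u) := by
  have hPu : P * lineProj u = lineProj u := by rw [mul_lineProj, hu]; rfl
  rw [IsSelfAdjoint.commute_iff hP (isStarProjection_lineProj u).isSelfAdjoint, hPu]
  exact (isStarProjection_lineProj u).isSelfAdjoint

theorem exists_isStarProjection_commute_separating [DecidableEq m] {P : Matrix m m ℂ}
    (hP : IsStarProjection P) {ψ φ : m → ℂ} (hE : cinner (P *ᵥ ψ) (P *ᵥ φ) = 0)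
    (hO : cinner ((1 - P) *ᵥ ψ) ((1 - P) *ᵥ φ) = 0) :
    ∃ S : Matrix m m ℂ, IsStarProjection S ∧ Commute S P ∧ S *ᵥ ψ = ψ ∧ S *ᵥ φ = 0 := by
  have hQ := hP.one_sub
  have hparts : cinner (P *ᵥ ψ) ((1 - P) *ᵥ ψ) = 0 := by
    rw [hP.cinner_mulVec_left_eq, mulVec_mulVec, hP.mul_one_sub_self, zero_mulVec,
      cinner_zero_right]
  have hcommE : Commute P (lineProj (P *ᵥ ψ)) :=
    commute_lineProj_of_mulVec_eq hP.isSelfAdjoint (hP.mulVec_mulVec_self ψ)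
  have hcommO : Commute P (lineProj ((1 - P) *ᵥ ψ)) := by
    have hcommQ := commute_lineProj_of_mulVec_eq hQ.isSelfAdjoint (hQ.mulVec_mulVec_self ψ)
    simpa only [sub_sub_cancel] using (Commute.one_left _).sub_left hcommQ
  refine ⟨lineProj (P *ᵥ ψ) + lineProj ((1 - P) *ᵥ ψ), ?_, (hcommE.add_right hcommO).symm, ?_,
    ?_⟩
  · refine (isStarProjection_lineProj _).add (isStarProjection_lineProj _) ?_
    rw [mul_lineProj, lineProj_mulVec_of_cinner_eq_zero hparts, zero_vecMulVec, smul_zero]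
  · rw [add_mulVec, lineProj_mulVec_of_cinner_eq (hP.cinner_mulVec_left_eq ψ ψ),
      lineProj_mulVec_of_cinner_eq (hQ.cinner_mulVec_left_eq ψ ψ), sub_mulVec, one_mulVec,
      add_sub_cancel]
  · rw [add_mulVec,
      lineProj_mulVec_of_cinner_eq_zero ((hP.cinner_mulVec_left_eq ψ φ).trans hE),
      lineProj_mulVec_of_cinner_eq_zero ((hQ.cinner_mulVec_left_eq ψ φ).trans hO), add_zero]

end

theorem parts_orthogonal_implies_perfect_discrimination_general
    {n : ℕ} (P_E P_O : Matrix (Fin n) (Fin n) ℂ)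
    (hPE : IsOrthoProj P_E) (hsum : P_E + P_O = 1)
    (ψ φ : Fin n → ℂ) (hψ : cinner ψ ψ = 1)
    (hE : cinner (P_E.mulVec ψ) (P_E.mulVec φ) = 0)
    (hO : cinner (P_O.mulVec ψ) (P_O.mulVec φ) = 0) :
    ∃ S : Matrix (Fin n) (Fin n) ℂ, IsOrthoProj S ∧ S * P_E = P_E * S ∧
      S.mulVec ψ = ψ ∧ S.mulVec φ = 0 ∧
      cinner ψ (S.mulVec ψ) - cinner φ (S.mulVec φ) = 1 := by
  obtain rfl : P_O = 1 - P_E := eq_sub_of_add_eq' hsum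
  obtain ⟨S, hS, hSP, hSψ, hSφ⟩ :=
    exists_isStarProjection_commute_separating (isOrthoProj_iff_isStarProjection.mp hPE) hE hO
  refine ⟨S, isOrthoProj_iff_isStarProjection.mpr hS, hSP, hSψ, hSφ, ?_⟩
  rw [hSψ, hSφ, hψ, cinner_zero_right, sub_zero]

/-- **Theorem 1, (separate orthogonality ⇒ perfect discrimination).**
If the `E` and `O` parts of two unit vectors `ψ, φ` are separately orthogonal, then there is
an orthogonal projection commuting with `P_E` that perfectly discriminates them. -/
theorem parts_orthogonal_implies_perfect_discrimination
    {n : ℕ} (P_E P_O : Matrix (Fin n) (Fin n) ℂ)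
    (hPE : IsOrthoProj P_E) (hPO : IsOrthoProj P_O) (hsum : P_E + P_O = 1)
    (ψ φ : Fin n → ℂ) (hψ : cinner ψ ψ = 1) (hφ : cinner φ φ = 1)
    (hE : cinner (P_E.mulVec ψ) (P_E.mulVec φ) = 0)
    (hO : cinner (P_O.mulVec ψ) (P_O.mulVec φ) = 0) :
    ∃ S : Matrix (Fin n) (Fin n) ℂ, IsOrthoProj S ∧ S * P_E = P_E * S ∧
      S.mulVec ψ = ψ ∧ S.mulVec φ = 0 ∧
      cinner ψ (S.mulVec ψ) - cinner φ (S.mulVec φ) = 1 :=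
  parts_orthogonal_implies_perfect_discrimination_general P_E P_O hPE hsum ψ φ hψ hE hO
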